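/- arXiv:1901.00161 — 2 statements merged into one kernel-verified Lean document; each statement's English description precedes it below -/
import Mathlib

section
/- For any elements x, y, z of a Coxeter group W, the Hecke algebra structure constants satisfy the cyclic symmetry f_{x,y,z^{-1}} = f_{y,z,x^{-1}} = f_{z,x,y^{-1}}. -/
open LaurentPolynomial
open scoped Classical

namespace Weighted

variable {B W : Type} [Group W] {cm : CoxeterMatrix B}

/-- `L` is a positive weight function on the weighted Coxeter group. -/
def IsWeightFunction (cs : CoxeterSystem cm W) (L : W → ℤ) : Prop :=
  (∀ w w' : W, cs.length (w * w') = cs.length w + cs.length w' →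
      L (w * w') = L w + L w') ∧
  (∀ i : B, 0 < L (cs.simple i))

/-- The structure constants `f_{x,y,z}` of the Hecke algebra of `(W,S,L)` in the
standard basis `{T_w}`, characterized by their defining recursion. -/
structure HeckeData (cs : CoxeterSystem cm W) (L : W → ℤ) where
  f : W → W → W → LaurentPolynomial ℤ
  f_finite : ∀ x y : W, {z | f x y z ≠ 0}.Finite
  f_one : ∀ x z : W, f x 1 z = if z = x then 1 else 0
  f_mul_simple : ∀ (x y z : W) (i : B),
    cs.length (y * cs.simple i) = cs.length y + 1 →
    f x (y * cs.simple i) z =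
      f x y (z * cs.simple i) +
      (if cs.length (z * cs.simple i) < cs.length z
        then ((T (L (cs.simple i)) : LaurentPolynomial ℤ) - T (-(L (cs.simple i)))) * f x y z
        else 0)

/-- Kazhdan–Lusztig data: the bar involution coefficients `rbar` (with
`\overline{T_x} = Σ_z rbar x z T_z`), the Kazhdan–Lusztig polynomials `p`
(with `C_y = Σ_x p x y T_x`) and the structure constants `h` of the KL basis
(`C_x C_y = Σ_z h x y z C_z`). -/
structure KLData (cs : CoxeterSystem cm W) (L : W → ℤ) extends HeckeData cs L where
  rbar : W → W → LaurentPolynomial ℤ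
  rbar_finite : ∀ x : W, {z | rbar x z ≠ 0}.Finite
  rbar_one : ∀ z : W, rbar 1 z = if z = 1 then 1 else 0
  rbar_simple_mul : ∀ (x z : W) (i : B),
    cs.length (cs.simple i * x) = cs.length x + 1 →
    rbar (cs.simple i * x) z =
      (∑ᶠ w : W, rbar x w * f (cs.simple i) w z) -
        ((T (L (cs.simple i)) : LaurentPolynomial ℤ) - T (-(L (cs.simple i)))) * rbar x z
  p : W → W → LaurentPolynomial ℤ
  p_finite : ∀ y : W, {x | p x y ≠ 0}.Finite
  p_diag : ∀ y : W, p y y = 1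
  p_length : ∀ x y : W, p x y ≠ 0 → cs.length x ≤ cs.length y
  p_deg : ∀ x y : W, x ≠ y → (p x y).degree < 0
  p_bar : ∀ x y : W, p x y = ∑ᶠ a : W, invert (p a y) * rbar a x
  h : W → W → W → LaurentPolynomial ℤ
  h_finite : ∀ x y : W, {z | h x y z ≠ 0}.Finite
  h_spec : ∀ x y z : W,
    (∑ᶠ a : W, ∑ᶠ b : W, p a x * p b y * f a b z) = ∑ᶠ w : W, h x y w * p z w

variable {cs : CoxeterSystem cm W} {L : W → ℤ}

/-- `x ≤_L y`. -/
def leftLe (D : KLData cs L) (x y : W) : Prop :=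
  Relation.ReflTransGen (fun u w => ∃ c, D.h c u w ≠ 0) y x

/-- `x ≤_R y`. -/
def rightLe (D : KLData cs L) (x y : W) : Prop :=
  Relation.ReflTransGen (fun u w => ∃ c, D.h u c w ≠ 0) y x

/-- `x ≤_{LR} y`. -/
def lrLe (D : KLData cs L) (x y : W) : Prop :=
  Relation.ReflTransGen (fun u w => (∃ c, D.h c u w ≠ 0) ∨ (∃ c, D.h u c w ≠ 0)) y x

def leftEquiv (D : KLData cs L) (x y : W) : Prop := leftLe D x y ∧ leftLe D y x
def rightEquiv (D : KLData cs L) (x y : W) : Prop := rightLe D x y ∧ rightLe D y x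
def lrEquiv (D : KLData cs L) (x y : W) : Prop := lrLe D x y ∧ lrLe D y x

/-- The left cell containing `w`. -/
def leftCell (D : KLData cs L) (w : W) : Set W := {x | leftEquiv D x w}
/-- The right cell containing `w`. -/
def rightCell (D : KLData cs L) (w : W) : Set W := {x | rightEquiv D x w}
/-- The two-sided cell containing `w`. -/
def lrCell (D : KLData cs L) (w : W) : Set W := {x | lrEquiv D x w}

/-- The standard parabolic subgroup `W_I`. -/
def parabolic (cs : CoxeterSystem cm W) (I : Set B) : Subgroup W :=
  Subgroup.closure (cs.simple '' I)

/-- `w` is the longest element `w_I` of the parabolic subgroup `W_I`. -/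
def IsLongestIn (cs : CoxeterSystem cm W) (I : Set B) (w : W) : Prop :=
  w ∈ parabolic cs I ∧ ∀ u ∈ parabolic cs I, cs.length u ≤ cs.length w

/-- `N = max L(w_I)`, the maximum of the weights of the longest elements of the
finite parabolic subgroups of `W`. -/
def NSpec (cs : CoxeterSystem cm W) (L : W → ℤ) (N : ℤ) : Prop :=
  (∃ (I : Set B) (w : W), IsLongestIn cs I w ∧ L w = N) ∧
  ∀ (I : Set B) (w : W), IsLongestIn cs I w → L w ≤ N

/-- `u ∈ M`, i.e. `u` is the longest element of some finite parabolic subgroup and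
`L u = N`. -/
def MemM (cs : CoxeterSystem cm W) (L : W → ℤ) (N : ℤ) (u : W) : Prop :=
  (∃ I : Set B, IsLongestIn cs I u) ∧ L u = N

/-- The set `Λ = {x·u·y (reduced) | x,y ∈ W, u ∈ M}`. -/
def Lam (cs : CoxeterSystem cm W) (L : W → ℤ) (N : ℤ) : Set W :=
  {w | ∃ u a b : W, MemM cs L N u ∧ w = a * u * b ∧
    cs.length w = cs.length a + cs.length u + cs.length b}

/-- The left descent set of `w`, as a set of indices. -/
def lD (cs : CoxeterSystem cm W) (w : W) : Set B := {i | cs.IsLeftDescent w i}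
/-- The right descent set of `w`, as a set of indices. -/
def rD (cs : CoxeterSystem cm W) (w : W) : Set B := {i | cs.IsRightDescent w i}

/-- `B_J = {x ∈ W | R(x) ⊆ S \ J}`. -/
def BJ (cs : CoxeterSystem cm W) (J : Set B) : Set W := {x | ∀ i ∈ J, ¬ cs.IsRightDescent x i}

/-- `U_J = {y ∈ W | L(y) ⊆ S \ J and s w_J y ∉ Λ for all s ∈ J}`. -/
def UJ (cs : CoxeterSystem cm W) (L : W → ℤ) (N : ℤ) (J : Set B) (wJ : W) : Set W :=
  {y | (∀ i ∈ J, ¬ cs.IsLeftDescent y i) ∧ ∀ i ∈ J, cs.simple i * wJ * y ∉ Lam cs L N}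

/-- `a` is Lusztig's `a`-function: `a w = max_{x,y} deg h_{x,y,w}`. -/
def ASpec (D : KLData cs L) (a : W → ℤ) : Prop :=
  ∀ w : W, (∃ x y : W, (D.h x y w).degree = (a w : WithBot ℤ)) ∧
    ∀ x y : W, (D.h x y w).degree ≤ (a w : WithBot ℤ)

/-- `γ_{x,y,z}`: the coefficient of `v^{a(z)}` in `h_{x,y,z⁻¹}`. -/
def gam (D : KLData cs L) (a : W → ℤ) (x y z : W) : ℤ := (D.h x y z⁻¹).coeff (a z)

/-- `β_{x,y,z}`: the coefficient of `v^N` in `f_{x,y,z⁻¹}`. -/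
def bet (D : HeckeData cs L) (N : ℤ) (x y z : W) : ℤ := (D.f x y z⁻¹).coeff N

/-- The Bruhat order on `W`. -/
def bruhatLe (cs : CoxeterSystem cm W) (u w : W) : Prop :=
  Relation.ReflTransGen
    (fun a b => cs.length a < cs.length b ∧ ∃ t, cs.IsReflection t ∧ b = a * t) u w

/-- `x` is indecomposable: `x ∉ M` and `x` admits no factorization
`x = x₁ w_{J''} x₂` with `x₁ ∈ P_{J,J''}∖M`, `x₂ ∈ P_{J'',J'}∖M`. -/
def Indecomposable (cs : CoxeterSystem cm W) (L : W → ℤ) (N : ℤ) (x : W) : Prop :=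
  ¬ MemM cs L N x ∧
  ¬ ∃ (K : Set B) (wK a b : W), IsLongestIn cs K wK ∧ L wK = N ∧
      x = a * wK * b ∧ cs.length x = cs.length a + cs.length wK + cs.length b ∧
      lD cs (a * wK) = lD cs x ∧ rD cs (a * wK) = K ∧ ¬ MemM cs L N (a * wK) ∧
      lD cs (wK * b) = K ∧ rD cs (wK * b) = rD cs x ∧ ¬ MemM cs L N (wK * b)


/-- `Γ_{J,y} = B_J w_J y`. -/
def GammaJ (cs : CoxeterSystem cm W) (J : Set B) (wJ y : W) : Set W :=
  {w | ∃ x ∈ BJ cs J, w = x * wJ * y}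

/-- The Coxeter matrix of a rank-3 affine Weyl group (`Ã₂`, `C̃₂` or `G̃₂`). -/
def IsAffineRank3 (cm : CoxeterMatrix B) : Prop :=
  ∃ i j k : B, i ≠ j ∧ i ≠ k ∧ j ≠ k ∧
    ((cm i j = 3 ∧ cm i k = 3 ∧ cm j k = 3) ∨
     (cm i j = 4 ∧ cm j k = 4 ∧ cm i k = 2) ∨
     (cm i j = 6 ∧ cm j k = 3 ∧ cm i k = 2))
/-- The basic involution on `W × ZMod 2` attached to a simple reflection. -/
noncomputable def eta (cs : CoxeterSystem cm W) (i : B) : Equiv.Perm (W × ZMod 2) :=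
  Function.Involutive.toPerm
    (fun x => (cs.simple i * x.1 * cs.simple i,
      x.2 + if x.1 = cs.simple i then 1 else 0))
    (by
      intro x
      have hss := cs.simple_mul_simple_self i
      refine Prod.ext ?_ ?_
      · show cs.simple i * (cs.simple i * x.1 * cs.simple i) * cs.simple i = x.1
        calc cs.simple i * (cs.simple i * x.1 * cs.simple i) * cs.simple i
            = (cs.simple i * cs.simple i) * x.1 * (cs.simple i * cs.simple i) := by group
          _ = x.1 := by rw [hss]; group
      · show x.2 + (if x.1 = cs.simple i then 1 else 0)
            + (if cs.simple i * x.1 * cs.simple i = cs.simple i then 1 else 0) = x.2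
        have hiff : (cs.simple i * x.1 * cs.simple i = cs.simple i) ↔ x.1 = cs.simple i := by
          constructor
          · intro h
            have := congrArg (fun u => cs.simple i * u * cs.simple i) h
            simpa [mul_assoc, hss] using this
          · intro h; rw [h, hss]; rw [one_mul]
        rw [if_congr hiff rfl rfl, add_assoc]
        rcases em (x.1 = cs.simple i) with h | h
        · rw [if_pos h]
          have h2 : (1 : ZMod 2) + 1 = 0 := by decide
          rw [h2, add_zero]
        · rw [if_neg h]; simp)

lemma eta_apply (cs : CoxeterSystem cm W) (i : B) (x : W × ZMod 2) :
    eta cs i x = (cs.simple i * x.1 * cs.simple i,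
      x.2 + if x.1 = cs.simple i then 1 else 0) := by
  rfl

lemma eta_pow_formula (cs : CoxeterSystem cm W) (i i' : B) (k : ℕ) (x : W × ZMod 2) :
    ((eta cs i * eta cs i') ^ k) x =
      ((cs.simple i * cs.simple i') ^ k * x.1 * ((cs.simple i * cs.simple i') ^ k)⁻¹,
        x.2 + ∑ j ∈ Finset.range (2 * k),
          if x.1 = ((cs.simple i * cs.simple i') ^ j)⁻¹ * cs.simple i' then 1 else 0) := by
  set p := cs.simple i * cs.simple i' with hp
  have hinv : ∀ u : W, cs.simple i' * p ^ 1 * cs.simple i' = p⁻¹ := by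
    intro _
    rw [pow_one, hp]
    rw [show cs.simple i' * (cs.simple i * cs.simple i') * cs.simple i'
        = cs.simple i' * cs.simple i * (cs.simple i' * cs.simple i') from by group,
      cs.simple_mul_simple_self i', mul_one]
    rw [mul_inv_rev, cs.inv_simple, cs.inv_simple]
  induction k generalizing x with
  | zero =>
    simp only [pow_zero, Equiv.Perm.coe_one, id_eq, mul_zero, Finset.range_zero,
      Finset.sum_empty, add_zero, one_mul, inv_one, mul_one]
  | succ k ih =>
    have conj_eq_iff : ∀ a b c u : W, (a * u * b = c) ↔ (u = a⁻¹ * c * b⁻¹) := by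
      intro a b c u
      constructor
      · intro h; rw [← h]; group
      · intro h; rw [h]; group
    have hkey : cs.simple i' * p = p⁻¹ * cs.simple i' := by
      rw [hp, mul_inv_rev, cs.inv_simple, cs.inv_simple, mul_assoc]
    have hshift : ∀ j : ℕ, p⁻¹ * ((p ^ j)⁻¹ * cs.simple i') * p
        = (p ^ (j + 2))⁻¹ * cs.simple i' := by
      intro j
      calc p⁻¹ * ((p ^ j)⁻¹ * cs.simple i') * p
          = p⁻¹ * (p ^ j)⁻¹ * (cs.simple i' * p) := by group
        _ = p⁻¹ * (p ^ j)⁻¹ * (p⁻¹ * cs.simple i') := by rw [hkey]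
        _ = (p ^ (j + 2))⁻¹ * cs.simple i' := by rw [pow_add, pow_two]; group
    have hstep : (eta cs i * eta cs i') x
        = (p * x.1 * p⁻¹, x.2 + ((if x.1 = (p ^ 1)⁻¹ * cs.simple i' then 1 else 0)
            + (if x.1 = (p ^ 0)⁻¹ * cs.simple i' then 1 else 0))) := by
      rw [Equiv.Perm.mul_apply, eta_apply, eta_apply]
      refine Prod.ext ?_ ?_
      · show cs.simple i * (cs.simple i' * x.1 * cs.simple i') * cs.simple i = p * x.1 * p⁻¹
        rw [hp, mul_inv_rev, cs.inv_simple, cs.inv_simple]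
        group
      · show x.2 + (if x.1 = cs.simple i' then 1 else 0)
            + (if cs.simple i' * x.1 * cs.simple i' = cs.simple i then 1 else 0) = _
        have c0 : (x.1 = cs.simple i') ↔ (x.1 = (p ^ 0)⁻¹ * cs.simple i') := by
          rw [pow_zero, inv_one, one_mul]
        have c1 : (cs.simple i' * x.1 * cs.simple i' = cs.simple i)
            ↔ (x.1 = (p ^ 1)⁻¹ * cs.simple i') := by
          rw [conj_eq_iff, pow_one, hp, mul_inv_rev, cs.inv_simple, cs.inv_simple]
        rw [if_congr c0 rfl rfl, if_congr c1 rfl rfl]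
        show _ = x.2 + ((if x.1 = (p ^ 1)⁻¹ * cs.simple i' then 1 else 0)
            + (if x.1 = (p ^ 0)⁻¹ * cs.simple i' then 1 else 0))
        ring
    rw [pow_succ, Equiv.Perm.mul_apply, hstep, ih]
    refine Prod.ext ?_ ?_
    · show p ^ k * (p * x.1 * p⁻¹) * (p ^ k)⁻¹ = p ^ (k + 1) * x.1 * (p ^ (k + 1))⁻¹
      rw [pow_succ]
      group
    · show x.2 + ((if x.1 = (p ^ 1)⁻¹ * cs.simple i' then 1 else 0)
            + (if x.1 = (p ^ 0)⁻¹ * cs.simple i' then 1 else 0))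
          + ∑ j ∈ Finset.range (2 * k),
              (if p * x.1 * p⁻¹ = (p ^ j)⁻¹ * cs.simple i' then 1 else 0)
        = x.2 + ∑ j ∈ Finset.range (2 * (k + 1)),
            (if x.1 = (p ^ j)⁻¹ * cs.simple i' then 1 else 0)
      have hsum : ∀ j : ℕ, (if p * x.1 * p⁻¹ = (p ^ j)⁻¹ * cs.simple i' then (1 : ZMod 2) else 0)
          = (if x.1 = (p ^ (j + 2))⁻¹ * cs.simple i' then 1 else 0) := by
        intro j
        refine if_congr ?_ rfl rfl
        rw [conj_eq_iff, inv_inv, hshift]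
      simp only [hsum]
      have h2 : 2 * (k + 1) = (2 * k + 1) + 1 := by ring
      rw [h2, Finset.sum_range_succ' _ (2 * k + 1), Finset.sum_range_succ' _ (2 * k)]
      ring

lemma eta_liftable (cs : CoxeterSystem cm W) : cm.IsLiftable (eta cs) := by
  intro i i'
  rcases Nat.eq_zero_or_pos (cm i i') with h0 | hpos
  · rw [h0, pow_zero]
  · refine Equiv.ext fun x => ?_
    rw [eta_pow_formula cs i i' (cm i i') x]
    have hp1 : (cs.simple i * cs.simple i') ^ (cm i i') = 1 := cs.simple_mul_simple_pow i i'
    have hper : ∀ j : ℕ, ((cs.simple i * cs.simple i') ^ (cm i i' + j))⁻¹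
        = ((cs.simple i * cs.simple i') ^ j)⁻¹ := by
      intro j
      rw [pow_add, hp1, one_mul]
    have hsplit : ∑ j ∈ Finset.range (2 * cm i i'),
        (if x.1 = ((cs.simple i * cs.simple i') ^ j)⁻¹ * cs.simple i' then (1 : ZMod 2) else 0)
        = 0 := by
      rw [two_mul, Finset.sum_range_add]
      have heq : ∀ j ∈ Finset.range (cm i i'),
          (if x.1 = ((cs.simple i * cs.simple i') ^ (cm i i' + j))⁻¹ * cs.simple i'
            then (1 : ZMod 2) else 0)
          = (if x.1 = ((cs.simple i * cs.simple i') ^ j)⁻¹ * cs.simple i'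
            then (1 : ZMod 2) else 0) := by
        intro j _
        rw [hper j]
      rw [Finset.sum_congr rfl heq, ← two_mul]
      rw [show (2 : ZMod 2) = 0 from by decide, zero_mul]
    rw [hsplit, add_zero, hp1]
    simp

/-- The reflection-cocycle representation of `W` on `W × ZMod 2`. -/
noncomputable def phi (cs : CoxeterSystem cm W) : W →* Equiv.Perm (W × ZMod 2) :=
  cs.lift ⟨eta cs, eta_liftable cs⟩

/-- The mod-2 count of occurrences of `t` in the right inversion sequence of `ω`. -/
noncomputable def risCount (cs : CoxeterSystem cm W) (ω : List B) (t : W) : ZMod 2 :=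
  ((cs.rightInvSeq ω).map (fun u => if t = u then (1 : ZMod 2) else 0)).sum

lemma risCount_nil (cs : CoxeterSystem cm W) (t : W) : risCount cs [] t = 0 := rfl

lemma risCount_cons (cs : CoxeterSystem cm W) (i : B) (ω : List B) (t : W) :
    risCount cs (i :: ω) t
      = (if t = (cs.wordProd ω)⁻¹ * cs.simple i * cs.wordProd ω then 1 else 0)
        + risCount cs ω t := by
  unfold risCount
  rw [show cs.rightInvSeq (i :: ω)
      = (cs.wordProd ω)⁻¹ * cs.simple i * cs.wordProd ω :: cs.rightInvSeq ω from rfl,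
    List.map_cons, List.sum_cons]

lemma phi_wordProd (cs : CoxeterSystem cm W) (ω : List B) (t : W) (e : ZMod 2) :
    phi cs (cs.wordProd ω) (t, e)
      = (cs.wordProd ω * t * (cs.wordProd ω)⁻¹, e + risCount cs ω t) := by
  induction ω generalizing e with
  | nil =>
    rw [cs.wordProd_nil, map_one, risCount_nil]
    simp
  | cons i ω ih =>
    rw [cs.wordProd_cons, map_mul, Equiv.Perm.mul_apply, ih]
    have hsi : phi cs (cs.simple i) = eta cs i := cs.lift_apply_simple _ i
    rw [hsi, eta_apply]
    refine Prod.ext ?_ ?_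
    · show cs.simple i * (cs.wordProd ω * t * (cs.wordProd ω)⁻¹) * cs.simple i
        = cs.simple i * cs.wordProd ω * t * (cs.simple i * cs.wordProd ω)⁻¹
      rw [mul_inv_rev, cs.inv_simple]
      group
    · show e + risCount cs ω t
          + (if cs.wordProd ω * t * (cs.wordProd ω)⁻¹ = cs.simple i then 1 else 0)
        = e + risCount cs (i :: ω) t
      rw [risCount_cons]
      have hc : (cs.wordProd ω * t * (cs.wordProd ω)⁻¹ = cs.simple i)
          ↔ (t = (cs.wordProd ω)⁻¹ * cs.simple i * cs.wordProd ω) := by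
        constructor
        · intro h; rw [← h]; group
        · intro h; rw [h]; group
      rw [if_congr hc rfl rfl]
      ring

/-- mod-2 inversion count, independent of the word. -/
noncomputable def nu (cs : CoxeterSystem cm W) (w t : W) : ZMod 2 :=
  (phi cs w (t, 0)).2

lemma nu_eq_risCount (cs : CoxeterSystem cm W) {ω : List B} {w : W} (hw : w = cs.wordProd ω)
    (t : W) : nu cs w t = risCount cs ω t := by
  rw [nu, hw, phi_wordProd, zero_add]

lemma risCount_eq_zero_of_not_mem (cs : CoxeterSystem cm W) {ω : List B} {t : W}
    (h : t ∉ cs.rightInvSeq ω) : risCount cs ω t = 0 := by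
  unfold risCount
  apply List.sum_eq_zero
  intro x hx
  rw [List.mem_map] at hx
  obtain ⟨u, hu, rfl⟩ := hx
  rw [if_neg]
  intro h'
  exact h (h' ▸ hu)

lemma nu_mul_simple (cs : CoxeterSystem cm W) (w : W) (j : B) :
    nu cs (w * cs.simple j) (cs.simple j) = 1 + nu cs w (cs.simple j) := by
  unfold nu
  rw [map_mul, Equiv.Perm.mul_apply]
  have hsj : phi cs (cs.simple j) = eta cs j := cs.lift_apply_simple _ j
  rw [hsj]
  have h1 : eta cs j ((cs.simple j : W), (0 : ZMod 2)) = (cs.simple j, 1) := by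
    rw [eta_apply]
    refine Prod.ext ?_ ?_
    · show cs.simple j * cs.simple j * cs.simple j = cs.simple j
      rw [cs.simple_mul_simple_self, one_mul]
    · show (0 : ZMod 2) + (if (cs.simple j : W) = cs.simple j then 1 else 0) = 1
      rw [if_pos rfl, zero_add]
  rw [h1]
  obtain ⟨ω, hred, hw⟩ := cs.exists_reduced_word' w
  rw [hw, phi_wordProd, phi_wordProd]
  show (1 : ZMod 2) + risCount cs ω (cs.simple j)
      = 1 + ((0 : ZMod 2) + risCount cs ω (cs.simple j))
  rw [zero_add]

lemma mem_ris_erase (cs : CoxeterSystem cm W) {ω : List B} {t : W}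
    (h : t ∈ cs.rightInvSeq ω) :
    ∃ k, k < ω.length ∧ cs.wordProd ω * t = cs.wordProd (ω.eraseIdx k) := by
  obtain ⟨n, hn, hget⟩ := List.getElem_of_mem h
  have hn' : n < ω.length := by
    have := cs.length_rightInvSeq ω
    omega
  refine ⟨n, hn', ?_⟩
  have h2 := cs.wordProd_mul_getD_rightInvSeq ω n
  rwa [List.getD_eq_getElem _ 1 hn, hget] at h2

/-- The (weak) exchange property. -/
lemma exchange_aux (cs : CoxeterSystem cm W) {w : W} {j : B}
    (hd : cs.length (w * cs.simple j) < cs.length w) {ω : List B}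
    (hred : cs.IsReduced ω) (hw : w = cs.wordProd ω) :
    ∃ k, k < ω.length ∧ w * cs.simple j = cs.wordProd (ω.eraseIdx k) := by
  have hmem : cs.simple j ∈ cs.rightInvSeq ω := by
    by_contra hmem
    have h0 : nu cs w (cs.simple j) = 0 := by
      rw [nu_eq_risCount cs hw, risCount_eq_zero_of_not_mem cs hmem]
    have h1 : nu cs (w * cs.simple j) (cs.simple j) = 1 := by
      rw [nu_mul_simple, h0, add_zero]
    obtain ⟨ω', hred', hw'⟩ := cs.exists_reduced_word' (w * cs.simple j)
    have h2 : risCount cs ω' (cs.simple j) = 1 := by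
      rw [← nu_eq_risCount cs hw', h1]
    have hmem' : cs.simple j ∈ cs.rightInvSeq ω' := by
      by_contra hm
      rw [risCount_eq_zero_of_not_mem cs hm] at h2
      exact absurd h2 (by decide)
    obtain ⟨k, hk, herase⟩ := mem_ris_erase cs hmem'
    rw [← hw'] at herase
    rw [mul_assoc, cs.simple_mul_simple_self, mul_one] at herase
    have h3 : cs.length w ≤ (ω'.eraseIdx k).length := herase ▸ cs.length_wordProd_le _
    have h4 : (ω'.eraseIdx k).length = ω'.length - 1 := List.length_eraseIdx_of_lt hk
    have h5 : ω'.length = cs.length (w * cs.simple j) := by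
      rw [hw']
      exact hred'.symm
    omega
  obtain ⟨k, hk, hout⟩ := mem_ris_erase cs hmem
  exact ⟨k, hk, by rw [hw, hout]⟩

/-- The key "Z-lemma": if `ℓ(s i z) = ℓ(z s j) = ℓ(z) + 1` and `ℓ(s i z s j) ≠ ℓ(z) + 2`,
then `s i z = z s j`. -/
lemma zlemma (cs : CoxeterSystem cm W) {i j : B} {z : W}
    (h1 : cs.length (cs.simple i * z) = cs.length z + 1)
    (h2 : cs.length (z * cs.simple j) = cs.length z + 1)
    (h3 : cs.length (cs.simple i * z * cs.simple j) ≠ cs.length z + 2) :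
    cs.simple i * z = z * cs.simple j := by
  obtain ⟨ω, hlen, hz⟩ := cs.exists_reduced_word z
  have hκ : cs.simple i * z = cs.wordProd (i :: ω) := by rw [cs.wordProd_cons, ← hz]
  have hredκ : cs.IsReduced (i :: ω) := by
    show cs.length (cs.wordProd (i :: ω)) = (i :: ω).length
    rw [← hκ, h1, List.length_cons, show cs.length z = ω.length by rw [hz]; exact hlen]
  have hd : cs.length ((cs.simple i * z) * cs.simple j) < cs.length (cs.simple i * z) := by
    rcases cs.length_mul_simple (cs.simple i * z) j with h | h
    · exact absurd (by omega : cs.length (cs.simple i * z * cs.simple j) = cs.length z + 2) h3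
    · omega
  obtain ⟨k, hk, hout⟩ := exchange_aux cs hd hredκ hκ
  match k with
  | 0 =>
    rw [List.eraseIdx_cons_zero, ← hz] at hout
    have := congrArg (· * cs.simple j) hout
    simpa [mul_assoc, cs.simple_mul_simple_self] using this
  | (k' + 1) =>
    exfalso
    rw [List.eraseIdx_cons_succ, cs.wordProd_cons] at hout
    rw [mul_assoc] at hout
    have hzj : z * cs.simple j = cs.wordProd (ω.eraseIdx k') := mul_left_cancel hout
    have h4 : cs.length (z * cs.simple j) ≤ (ω.eraseIdx k').length :=
      hzj ▸ cs.length_wordProd_le _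
    have h5 : k' < ω.length := by
      have := hk
      simp only [List.length_cons] at this
      omega
    have h6 : (ω.eraseIdx k').length = ω.length - 1 := List.length_eraseIdx_of_lt h5
    have hlen' : cs.length z = ω.length := by rw [hz]; exact hlen
    omega

/-- Conjugate simple reflections (with length condition) have equal weight. -/
lemma weight_eq_of_conj {cs : CoxeterSystem cm W} {L : W → ℤ} (hL : IsWeightFunction cs L)
    {i j : B} {u : W} (hij : cs.simple i * u = u * cs.simple j)
    (h1 : cs.length (cs.simple i * u) = cs.length u + 1) :
    L (cs.simple i) = L (cs.simple j) := by
  have h2 : cs.length (u * cs.simple j) = cs.length u + 1 := by rw [← hij, h1]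
  have a1 : L (cs.simple i * u) = L (cs.simple i) + L u :=
    hL.1 _ _ (by rw [h1, cs.length_simple]; omega)
  have a2 : L (u * cs.simple j) = L u + L (cs.simple j) :=
    hL.1 _ _ (by rw [h2, cs.length_simple])
  have := a1.symm.trans (by rw [hij, a2])
  omega

/-- Build up elements of `W` by multiplying simple reflections on the right. -/
lemma right_induction (cs : CoxeterSystem cm W) {P : W → Prop} (h1 : P 1)
    (hs : ∀ (y : W) (i : B), cs.length (y * cs.simple i) = cs.length y + 1 → P y
      → P (y * cs.simple i)) : ∀ y, P y := by
  suffices h : ∀ (n : ℕ) (y : W), cs.length y ≤ n → P y from fun y => h (cs.length y) y le_rfl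
  intro n
  induction n with
  | zero =>
    intro y hy
    have : y = 1 := cs.length_eq_zero_iff.mp (Nat.le_zero.mp hy)
    exact this ▸ h1
  | succ n ih =>
    intro y hy
    by_cases hy1 : y = 1
    · exact hy1 ▸ h1
    obtain ⟨i, hi⟩ := cs.exists_rightDescent_of_ne_one hy1
    have hi' : cs.length (y * cs.simple i) + 1 = cs.length y := cs.isRightDescent_iff.mp hi
    have hP : P (y * cs.simple i) := ih _ (by omega)
    have hstep := hs (y * cs.simple i) i (by rw [cs.simple_mul_simple_cancel_right]; omega) hP
    rwa [cs.simple_mul_simple_cancel_right] at hstep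

/-- Left-multiplication recursion for the structure constants. -/
lemma f_simple_mul (cs : CoxeterSystem cm W) (L : W → ℤ) (hL : IsWeightFunction cs L)
    (D : HeckeData cs L) :
    ∀ (y x z : W) (i : B), cs.length (cs.simple i * x) = cs.length x + 1 →
      D.f (cs.simple i * x) y z =
        D.f x y (cs.simple i * z) +
          (if cs.length (cs.simple i * z) < cs.length z
            then ((T (L (cs.simple i)) : LaurentPolynomial ℤ) - T (-(L (cs.simple i)))) * D.f x y z
            else 0) := by
  refine right_induction cs ?_ ?_
  · intro x z i hx
    rw [D.f_one, D.f_one, D.f_one]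
    by_cases hzx : z = x
    · have hcond : ¬ cs.length (cs.simple i * z) < cs.length z := by
        rw [hzx, hx]; omega
      have h1 : z ≠ cs.simple i * x := by
        intro h
        have h' : cs.length z = cs.length (cs.simple i * x) := congrArg cs.length h
        rw [hx, hzx] at h'
        omega
      have h2 : cs.simple i * z ≠ x := by
        intro h
        have h' : cs.length (cs.simple i * z) = cs.length x := congrArg cs.length h
        rw [hzx, hx] at h'
        omega
      rw [if_neg h1, if_neg h2, if_neg hcond, add_zero]
    · have hc : (z = cs.simple i * x) ↔ (cs.simple i * z = x) := by
        constructor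
        · intro h; rw [h, cs.simple_mul_simple_cancel_left]
        · intro h; rw [← h, cs.simple_mul_simple_cancel_left]
      rw [if_congr hc rfl rfl, if_neg hzx]
      have : (if cs.length (cs.simple i * z) < cs.length z
          then ((T (L (cs.simple i)) : LaurentPolynomial ℤ) - T (-(L (cs.simple i)))) * 0
          else 0) = 0 := by
        rcases em (cs.length (cs.simple i * z) < cs.length z) with h | h
        · rw [if_pos h, mul_zero]
        · rw [if_neg h]
      rw [this, add_zero]
  · intro y j hyj ih x z i hx
    rw [D.f_mul_simple (cs.simple i * x) y z j hyj,
        D.f_mul_simple x y (cs.simple i * z) j hyj,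
        D.f_mul_simple x y z j hyj,
        ih x (z * cs.simple j) i hx, ih x z i hx,
        ← mul_assoc (cs.simple i) z (cs.simple j)]
    have hc2 := cs.length_simple_mul (z * cs.simple j) i
    rw [← mul_assoc (cs.simple i) z (cs.simple j)] at hc2
    rcases cs.length_simple_mul z i with ha | ha <;>
      rcases cs.length_mul_simple z j with hb | hb
    · -- ℓ(s i z) = ℓ z + 1, ℓ(z s j) = ℓ z + 1
      rcases cs.length_mul_simple (cs.simple i * z) j with hc | hc
      · -- ℓ(s i z s j) = ℓ z + 2 : all conditions false
        have hC1 : ¬ cs.length (cs.simple i * z * cs.simple j) < cs.length (z * cs.simple j) :=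
          by omega
        have hC2 : ¬ cs.length (z * cs.simple j) < cs.length z := by omega
        have hC3 : ¬ cs.length (cs.simple i * z) < cs.length z := by omega
        have hC4 : ¬ cs.length (cs.simple i * z * cs.simple j) < cs.length (cs.simple i * z) :=
          by omega
        simp only [if_neg hC1, if_neg hC2, if_neg hC3, if_neg hC4]
      · -- ℓ(s i z s j) = ℓ z : bad case, use the Z-lemma
        have e := zlemma cs ha hb (by omega)
        have hw := weight_eq_of_conj hL e ha
        have hC1 : cs.length (cs.simple i * z * cs.simple j) < cs.length (z * cs.simple j) :=
          by omega
        have hC2 : ¬ cs.length (z * cs.simple j) < cs.length z := by omega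
        have hC3 : ¬ cs.length (cs.simple i * z) < cs.length z := by omega
        have hC4 : cs.length (cs.simple i * z * cs.simple j) < cs.length (cs.simple i * z) :=
          by omega
        simp only [if_pos hC1, if_neg hC2, if_neg hC3, if_pos hC4]
        rw [e, hw]
    · -- ℓ(s i z) = ℓ z + 1, ℓ(z s j) + 1 = ℓ z
      have hlc : cs.length (cs.simple i * z * cs.simple j) = cs.length z := by
        rcases cs.length_mul_simple (cs.simple i * z) j with hc | hc <;>
          rcases hc2 with h' | h' <;> omega
      have hC1 : ¬ cs.length (cs.simple i * z * cs.simple j) < cs.length (z * cs.simple j) :=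
        by omega
      have hC2 : cs.length (z * cs.simple j) < cs.length z := by omega
      have hC3 : ¬ cs.length (cs.simple i * z) < cs.length z := by omega
      have hC4 : cs.length (cs.simple i * z * cs.simple j) < cs.length (cs.simple i * z) :=
        by omega
      simp only [if_neg hC1, if_pos hC2, if_neg hC3, if_pos hC4]
      ring
    · -- ℓ(s i z) + 1 = ℓ z, ℓ(z s j) = ℓ z + 1
      have hlc : cs.length (cs.simple i * z * cs.simple j) = cs.length z := by
        rcases cs.length_mul_simple (cs.simple i * z) j with hc | hc <;>
          rcases hc2 with h' | h' <;> omega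
      have hC1 : cs.length (cs.simple i * z * cs.simple j) < cs.length (z * cs.simple j) :=
        by omega
      have hC2 : ¬ cs.length (z * cs.simple j) < cs.length z := by omega
      have hC3 : cs.length (cs.simple i * z) < cs.length z := by omega
      have hC4 : ¬ cs.length (cs.simple i * z * cs.simple j) < cs.length (cs.simple i * z) :=
        by omega
      simp only [if_pos hC1, if_neg hC2, if_pos hC3, if_neg hC4]
      ring
    · -- ℓ(s i z) + 1 = ℓ z, ℓ(z s j) + 1 = ℓ z
      rcases cs.length_mul_simple (cs.simple i * z) j with hc | hc
      · -- ℓ(s i z s j) = ℓ z : bad case (descending version)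
        have h1' : cs.length (cs.simple i * (cs.simple i * z)) = cs.length (cs.simple i * z) + 1 :=
          by rw [cs.simple_mul_simple_cancel_left]; omega
        have h2' : cs.length ((cs.simple i * z) * cs.simple j)
            = cs.length (cs.simple i * z) + 1 := by omega
        have h3' : cs.length (cs.simple i * (cs.simple i * z) * cs.simple j)
            ≠ cs.length (cs.simple i * z) + 2 := by
          rw [cs.simple_mul_simple_cancel_left]; omega
        have e' := zlemma cs h1' h2' h3'
        have hw := weight_eq_of_conj hL e' h1'
        rw [cs.simple_mul_simple_cancel_left] at e'
        -- e' : z = s i * z * s j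
        have e : z * cs.simple j = cs.simple i * z := by
          nth_rewrite 1 [e']
          exact cs.simple_mul_simple_cancel_right j
        have hC1 : ¬ cs.length (cs.simple i * z * cs.simple j) < cs.length (z * cs.simple j) :=
          by omega
        have hC2 : cs.length (z * cs.simple j) < cs.length z := by omega
        have hC3 : cs.length (cs.simple i * z) < cs.length z := by omega
        have hC4 : ¬ cs.length (cs.simple i * z * cs.simple j) < cs.length (cs.simple i * z) :=
          by omega
        simp only [if_neg hC1, if_pos hC2, if_pos hC3, if_neg hC4]
        rw [← e, hw]
      · -- ℓ(s i z s j) = ℓ z - 2 : all conditions true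
        have hC1 : cs.length (cs.simple i * z * cs.simple j) < cs.length (z * cs.simple j) :=
          by omega
        have hC2 : cs.length (z * cs.simple j) < cs.length z := by omega
        have hC3 : cs.length (cs.simple i * z) < cs.length z := by omega
        have hC4 : cs.length (cs.simple i * z * cs.simple j) < cs.length (cs.simple i * z) :=
          by omega
        simp only [if_pos hC1, if_pos hC2, if_pos hC3, if_pos hC4]
        ring

lemma f_one_left (cs : CoxeterSystem cm W) (L : W → ℤ) (D : HeckeData cs L) :
    ∀ (y z : W), D.f 1 y z = if z = y then 1 else 0 := by
  have key : ∀ y : W, ∀ z : W, D.f 1 y z = if z = y then 1 else 0 := by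
    refine right_induction cs ?_ ?_
    · intro z; exact D.f_one 1 z
    · intro y j hyj ih z
      rw [D.f_mul_simple 1 y z j hyj, ih (z * cs.simple j), ih z]
      by_cases hzy : z = y
      · subst hzy
        rw [if_neg (show ¬ z * cs.simple j = z from fun h => by
            have := congrArg cs.length h
            have := cs.length_mul_simple_ne z j
            exact this (by rw [← ‹cs.length (z * cs.simple j) = cs.length z›])),
          if_neg (show ¬ cs.length (z * cs.simple j) < cs.length z from by omega),
          if_neg (show ¬ z = z * cs.simple j from fun h => by
            have h' := congrArg cs.length h
            omega),
          add_zero]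
      · have hc : (z * cs.simple j = y) ↔ (z = y * cs.simple j) := by
          constructor
          · intro h; rw [← h, cs.simple_mul_simple_cancel_right]
          · intro h; rw [h, cs.simple_mul_simple_cancel_right]
        rw [if_congr hc rfl rfl, if_neg hzy]
        have : (if cs.length (z * cs.simple j) < cs.length z
            then ((T (L (cs.simple j)) : LaurentPolynomial ℤ) - T (-(L (cs.simple j)))) * 0
            else 0) = 0 := by
          rcases em (cs.length (z * cs.simple j) < cs.length z) with h | h
          · rw [if_pos h, mul_zero]
          · rw [if_neg h]
        rw [this, add_zero]
  exact key

/-- The antiautomorphism `T_w ↦ T_{w⁻¹}` preserves the structure constants. -/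
lemma f_inv (cs : CoxeterSystem cm W) (L : W → ℤ) (hL : IsWeightFunction cs L)
    (D : HeckeData cs L) :
    ∀ (y x z : W), D.f x y z = D.f y⁻¹ x⁻¹ z⁻¹ := by
  refine right_induction cs ?_ ?_
  · intro x z
    rw [D.f_one, inv_one, f_one_left cs L D]
    exact if_congr inv_inj.symm rfl rfl
  · intro y j hyj ih x z
    rw [D.f_mul_simple x y z j hyj, ih x (z * cs.simple j), ih x z]
    have hinv : (y * cs.simple j)⁻¹ = cs.simple j * y⁻¹ := by
      rw [mul_inv_rev, cs.inv_simple]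
    rw [hinv]
    have hlen : cs.length (cs.simple j * y⁻¹) = cs.length y⁻¹ + 1 := by
      rw [show cs.simple j * y⁻¹ = (y * cs.simple j)⁻¹ from by rw [mul_inv_rev, cs.inv_simple],
        cs.length_inv, cs.length_inv, hyj]
    rw [f_simple_mul cs L hL D x⁻¹ y⁻¹ z⁻¹ j hlen]
    rw [show (z * cs.simple j)⁻¹ = cs.simple j * z⁻¹ from by rw [mul_inv_rev, cs.inv_simple]]
    have hL1 : cs.length (cs.simple j * z⁻¹) = cs.length (z * cs.simple j) := by
      rw [show cs.simple j * z⁻¹ = (z * cs.simple j)⁻¹ from by rw [mul_inv_rev, cs.inv_simple],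
        cs.length_inv]
    have hL2 : cs.length (z⁻¹ : W) = cs.length z := cs.length_inv z
    rw [hL1, hL2]

/-- Vanishing and normalization of `f` in low degree. -/
lemma f_low (cs : CoxeterSystem cm W) (L : W → ℤ) (D : HeckeData cs L) :
    ∀ (y x w : W),
      (cs.length w + cs.length y < cs.length x → D.f x y w = 0) ∧
      (cs.length w + cs.length y = cs.length x →
        D.f x y w = if w = x * y then 1 else 0) := by
  refine right_induction cs ?_ ?_
  · intro x w
    constructor
    · intro h
      rw [D.f_one, if_neg (fun hw : w = x => by rw [hw] at h; simp at h)]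
    · intro h
      rw [D.f_one, mul_one]
  · intro y j hyj ih x w
    have hwj := cs.length_mul_simple w j
    constructor
    · intro h
      rw [D.f_mul_simple x y w j hyj, (ih x (w * cs.simple j)).1 (by omega),
        (ih x w).1 (by omega), zero_add]
      rcases em (cs.length (w * cs.simple j) < cs.length w) with hc | hc
      · rw [if_pos hc, mul_zero]
      · rw [if_neg hc]
    · intro h
      rw [D.f_mul_simple x y w j hyj]
      rcases hwj with hup | hdn
      · rw [if_neg (by omega), (ih x (w * cs.simple j)).2 (by omega), add_zero]
        refine if_congr ?_ rfl rfl
        constructor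
        · intro hw
          rw [← mul_assoc, ← hw, cs.simple_mul_simple_cancel_right]
        · intro hw
          rw [hw, mul_assoc x, cs.simple_mul_simple_cancel_right]
      · rw [if_pos (by omega), (ih x (w * cs.simple j)).1 (by omega),
          (ih x w).1 (by omega), mul_zero, add_zero]
        rw [if_neg ?_]
        intro hw
        have hwj2 : w * cs.simple j = x * y := by
          rw [hw, mul_assoc x, cs.simple_mul_simple_cancel_right]
        have hle : cs.length x ≤ cs.length (x * y) + cs.length y := by
          have h2 := cs.length_mul_le (x * y) y⁻¹
          rw [mul_assoc, mul_inv_cancel, mul_one, cs.length_inv] at h2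
          exact h2
        rw [← hwj2] at hle
        omega

/-- The trace property: the coefficient of `T_1` in `T_x T_y` is `δ_{y, x⁻¹}`. -/
lemma f_mul_one (cs : CoxeterSystem cm W) (L : W → ℤ) (hL : IsWeightFunction cs L)
    (D : HeckeData cs L) (x y : W) :
    D.f x y 1 = if y = x⁻¹ then 1 else 0 := by
  rcases Nat.lt_trichotomy (cs.length x) (cs.length y) with hlt | heq | hgt
  · rw [f_inv cs L hL D y x 1, inv_one]
    rw [(f_low cs L D x⁻¹ y⁻¹ 1).1 (by
      rw [cs.length_one, cs.length_inv, cs.length_inv]; omega)]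
    rw [if_neg (fun h : y = x⁻¹ => by
      have := congrArg cs.length h
      rw [cs.length_inv] at this
      omega)]
  · rw [(f_low cs L D y x 1).2 (by rw [cs.length_one]; omega)]
    refine if_congr ?_ rfl rfl
    constructor
    · intro h
      have h2 : x * y = 1 := h.symm
      calc y = x⁻¹ * (x * y) := by group
        _ = x⁻¹ := by rw [h2, mul_one]
    · intro h
      rw [h]
      exact (mul_inv_cancel x).symm
  · rw [(f_low cs L D y x 1).1 (by rw [cs.length_one]; omega)]
    rw [if_neg (fun h : y = x⁻¹ => by
      have := congrArg cs.length h
      rw [cs.length_inv] at this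
      omega)]

/-- Cyclic symmetry of the structure constants. -/
lemma f_cyc (cs : CoxeterSystem cm W) (L : W → ℤ) (hL : IsWeightFunction cs L)
    (D : HeckeData cs L) :
    ∀ (z x y : W), D.f x y z⁻¹ = D.f y z x⁻¹ := by
  refine right_induction cs ?_ ?_
  · intro x y
    rw [inv_one, f_mul_one cs L hL D x y, D.f_one]
    exact if_congr eq_comm rfl rfl
  · intro z j hzj ih x y
    rw [D.f_mul_simple y z x⁻¹ j hzj]
    have e1 : x⁻¹ * cs.simple j = (cs.simple j * x)⁻¹ := by
      rw [mul_inv_rev, cs.inv_simple]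
    rw [e1, ← ih (cs.simple j * x) y, ← ih x y]
    have e2 : (z * cs.simple j)⁻¹ = cs.simple j * z⁻¹ := by
      rw [mul_inv_rev, cs.inv_simple]
    rw [e2]
    have hLx : cs.length ((cs.simple j * x)⁻¹) = cs.length (cs.simple j * x) := cs.length_inv _
    have hLx2 : cs.length (x⁻¹ : W) = cs.length x := cs.length_inv x
    have hLz : cs.length (cs.simple j * z⁻¹) = cs.length z + 1 := by
      rw [show cs.simple j * z⁻¹ = (z * cs.simple j)⁻¹ from e2.symm, cs.length_inv, hzj]
    have hLz2 : cs.length (z⁻¹ : W) = cs.length z := cs.length_inv z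
    rcases cs.length_simple_mul x j with hup | hdn
    · -- ℓ(s j x) = ℓ x + 1
      rw [f_simple_mul cs L hL D y x z⁻¹ j hup]
      rw [if_neg (show ¬ cs.length (cs.simple j * z⁻¹) < cs.length (z⁻¹ : W) from by omega),
        if_neg (show ¬ cs.length ((cs.simple j * x)⁻¹) < cs.length (x⁻¹ : W) from by omega),
        add_zero, add_zero]
    · -- ℓ(s j x) + 1 = ℓ x
      have hxx : cs.length (cs.simple j * (cs.simple j * x)) = cs.length (cs.simple j * x) + 1 := by
        rw [cs.simple_mul_simple_cancel_left]
        omega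
      have hsplit := f_simple_mul cs L hL D y (cs.simple j * x) (cs.simple j * z⁻¹) j hxx
      rw [cs.simple_mul_simple_cancel_left, cs.simple_mul_simple_cancel_left] at hsplit
      rw [hsplit]
      have hsplit2 := f_simple_mul cs L hL D y (cs.simple j * x) z⁻¹ j hxx
      rw [cs.simple_mul_simple_cancel_left] at hsplit2
      rw [hsplit2]
      rw [if_pos (show cs.length (z⁻¹ : W) < cs.length (cs.simple j * z⁻¹) from by omega),
        if_neg (show ¬ cs.length (cs.simple j * z⁻¹) < cs.length (z⁻¹ : W) from by omega),
        if_pos (show cs.length ((cs.simple j * x)⁻¹) < cs.length (x⁻¹ : W) from by omega),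
        add_zero]


/-- cyclic symmetry `f_{x,y,z⁻¹} = f_{y,z,x⁻¹} = f_{z,x,y⁻¹}`. -/
theorem stmt2 (cs : CoxeterSystem cm W) (L : W → ℤ) (hL : IsWeightFunction cs L)
    (D : HeckeData cs L) (x y z : W) :
    D.f x y z⁻¹ = D.f y z x⁻¹ ∧ D.f y z x⁻¹ = D.f z x y⁻¹ :=
  ⟨f_cyc cs L hL D z x y, f_cyc cs L hL D x y z⟩

end Weighted
end

section
/- If γ_{x,y,z} ≠ 0 and a(z) = N for x,y,z ∈ W, then β_{x,y,z} = γ_{x,y,z} ≠ 0. -/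
open LaurentPolynomial
open scoped Classical

namespace Weighted

variable {B W : Type} [Group W] {cm : CoxeterMatrix B}

variable {cs : CoxeterSystem cm W} {L : W → ℤ}

private lemma lp_coeff_eq_zero_of_lt {f : LaurentPolynomial ℤ} {n : ℤ}
    (h : f.degree < (n : WithBot ℤ)) : f.coeff n = 0 := by
  by_contra hf
  exact absurd (Finset.le_max (Finsupp.mem_support_iff.mpr hf)) (not_le.mpr h)

private lemma lp_degree_mul_le (f g : LaurentPolynomial ℤ) :
    (f * g).degree ≤ f.degree + g.degree := by
  have h := AddMonoidAlgebra.supDegree_mul_le (R := ℤ) (A := ℤ)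
    (D := ((↑) : ℤ → WithBot ℤ)) (p := f) (q := g) (fun a b => by push_cast; ring)
  simpa [AddMonoidAlgebra.supDegree, LaurentPolynomial.degree,
    Finset.max_eq_sup_withBot] using h

private lemma lp_degree_one : (1 : LaurentPolynomial ℤ).degree ≤ 0 := by
  simpa using LaurentPolynomial.degree_C_le (1 : ℤ)

private lemma wb1 {a b : WithBot ℤ} {n : ℤ} (ha : a < 0) (hb : b ≤ (n : WithBot ℤ)) :
    a + b < (n : WithBot ℤ) := by
  cases a with
  | bot => simpa using WithBot.bot_lt_coe n
  | coe a' =>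
    cases b with
    | bot => simpa using WithBot.bot_lt_coe n
    | coe b' =>
      have ha' : a' < 0 := by exact_mod_cast ha
      have hb' : b' ≤ n := by exact_mod_cast hb
      exact_mod_cast by omega

private lemma wb2 {a b : WithBot ℤ} {n : ℤ} (ha : a ≤ (n : WithBot ℤ)) (hb : b < 0) :
    a + b < (n : WithBot ℤ) := by
  rw [add_comm]; exact wb1 hb ha

private lemma wb_le {a b : WithBot ℤ} {n : ℤ} (ha : a ≤ 0) (hb : b ≤ (n : WithBot ℤ)) :
    a + b ≤ (n : WithBot ℤ) := by
  simpa using add_le_add ha hb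

private lemma p_deg_le (D : KLData cs L) (u w : W) : (D.p u w).degree ≤ 0 := by
  by_cases h : u = w
  · subst h; rw [D.p_diag]; exact lp_degree_one
  · exact (D.p_deg u w h).le

private lemma lhs_coeff (D : KLData cs L) (N : ℤ)
    (hbound : ∀ x y z : W, (D.f x y z).degree ≤ (N : WithBot ℤ))
    (x y z : W) (m : ℤ) (hm : (N : WithBot ℤ) ≤ (m : WithBot ℤ)) :
    (∑ᶠ a : W, ∑ᶠ b : W, D.p a x * D.p b y * D.f a b z).coeff m = (D.f x y z).coeff m := by
  have hf_le : ∀ a b : W, (D.f a b z).degree ≤ (m : WithBot ℤ) :=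
    fun a b => (hbound a b z).trans hm
  -- finiteness of the inner families
  have hin : ∀ a : W,
      (Function.support fun b => D.p a x * D.p b y * D.f a b z).Finite := by
    intro a
    apply (D.p_finite y).subset
    intro b hb
    simp only [Function.mem_support] at hb
    intro hpb
    exact hb (by simp [hpb])
  have hout : (Function.support fun a => ∑ᶠ b : W, D.p a x * D.p b y * D.f a b z).Finite := by
    apply (D.p_finite x).subset
    intro a ha
    simp only [Function.mem_support] at ha
    intro hpa
    exact ha (finsum_eq_zero_of_forall_eq_zero (fun b => by simp [hpa]))
  have key := ((Finsupp.applyAddHom (m : ℤ)).comp AddMonoidAlgebra.coeffAddEquiv.toAddMonoidHom :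
      (LaurentPolynomial ℤ) →+ ℤ).map_finsum hout
  rw [show ((∑ᶠ a : W, ∑ᶠ b : W, D.p a x * D.p b y * D.f a b z).coeff m) =
      ((Finsupp.applyAddHom (m : ℤ)).comp AddMonoidAlgebra.coeffAddEquiv.toAddMonoidHom : (LaurentPolynomial ℤ) →+ ℤ)
        (∑ᶠ a : W, ∑ᶠ b : W, D.p a x * D.p b y * D.f a b z) from rfl, key]
  have inner : ∀ a : W,
      ((Finsupp.applyAddHom (m : ℤ)).comp AddMonoidAlgebra.coeffAddEquiv.toAddMonoidHom : (LaurentPolynomial ℤ) →+ ℤ)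
        (∑ᶠ b : W, D.p a x * D.p b y * D.f a b z)
      = ∑ᶠ b : W, (D.p a x * D.p b y * D.f a b z).coeff m := by
    intro a
    exact ((Finsupp.applyAddHom (m : ℤ)).comp AddMonoidAlgebra.coeffAddEquiv.toAddMonoidHom :
      (LaurentPolynomial ℤ) →+ ℤ).map_finsum (hin a)
  rw [finsum_congr inner]
  rw [finsum_eq_single _ x ?_]
  · rw [finsum_eq_single _ y ?_]
    · rw [D.p_diag, D.p_diag, one_mul, one_mul]
    · intro b hb
      apply lp_coeff_eq_zero_of_lt
      calc (D.p x x * D.p b y * D.f x b z).degree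
          ≤ (D.p x x * D.p b y).degree + (D.f x b z).degree := lp_degree_mul_le _ _
        _ < (m : WithBot ℤ) := by
            apply wb1 ?_ (hf_le x b)
            calc (D.p x x * D.p b y).degree ≤ (D.p x x).degree + (D.p b y).degree :=
                  lp_degree_mul_le _ _
              _ < 0 := by
                  have : (0 : WithBot ℤ) = ((0 : ℤ) : WithBot ℤ) := rfl
                  rw [this]
                  exact wb2 (by simpa using p_deg_le D x x) (D.p_deg b y hb)
  · intro a ha
    apply finsum_eq_zero_of_forall_eq_zero
    intro b
    apply lp_coeff_eq_zero_of_lt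
    calc (D.p a x * D.p b y * D.f a b z).degree
        ≤ (D.p a x * D.p b y).degree + (D.f a b z).degree := lp_degree_mul_le _ _
      _ < (m : WithBot ℤ) := by
          apply wb1 ?_ (hf_le a b)
          calc (D.p a x * D.p b y).degree ≤ (D.p a x).degree + (D.p b y).degree :=
                lp_degree_mul_le _ _
            _ < 0 := by
                have : (0 : WithBot ℤ) = ((0 : ℤ) : WithBot ℤ) := rfl
                rw [this]
                exact wb1 (D.p_deg a x ha) (p_deg_le D b y)

private lemma rhs_coeff (D : KLData cs L) (N : ℤ) (x y z : W) (m : ℤ)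
    (hh : ∀ w : W, (D.h x y w).degree ≤ (m : WithBot ℤ)) :
    (∑ᶠ w : W, D.h x y w * D.p z w).coeff m = (D.h x y z).coeff m := by
  have hfin : (Function.support fun w => D.h x y w * D.p z w).Finite := by
    apply (D.h_finite x y).subset
    intro w hw
    simp only [Function.mem_support] at hw
    intro hzero
    exact hw (by simp [hzero])
  have key := ((Finsupp.applyAddHom (m : ℤ)).comp AddMonoidAlgebra.coeffAddEquiv.toAddMonoidHom :
      (LaurentPolynomial ℤ) →+ ℤ).map_finsum hfin
  rw [show ((∑ᶠ w : W, D.h x y w * D.p z w).coeff m) =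
      ((Finsupp.applyAddHom (m : ℤ)).comp AddMonoidAlgebra.coeffAddEquiv.toAddMonoidHom : (LaurentPolynomial ℤ) →+ ℤ)
        (∑ᶠ w : W, D.h x y w * D.p z w) from rfl, key]
  rw [finsum_eq_single _ z ?_]
  · rw [D.p_diag, mul_one]; rfl
  · intro w hw
    apply lp_coeff_eq_zero_of_lt
    calc (D.h x y w * D.p z w).degree
        ≤ (D.h x y w).degree + (D.p z w).degree := lp_degree_mul_le _ _
      _ < (m : WithBot ℤ) := wb2 (hh w) (D.p_deg z w (fun e => hw e.symm))

private lemma h_deg_le (D : KLData cs L) (N : ℤ)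
    (hbound : ∀ x y z : W, (D.f x y z).degree ≤ (N : WithBot ℤ)) (x y w : W) :
    (D.h x y w).degree ≤ (N : WithBot ℤ) := by
  by_contra hcon
  -- pick w₀ with maximal degree among the (finitely many) w with h x y w ≠ 0
  have hw0 : D.h x y w ≠ 0 := by
    intro e; rw [e] at hcon; exact hcon (by simp)
  set s : Finset W := (D.h_finite x y).toFinset with hs
  have hne : s.Nonempty := ⟨w, by simp [hs, hw0]⟩
  obtain ⟨w₀, hw₀s, hsup⟩ := Finset.exists_mem_eq_sup s hne (fun u => (D.h x y u).degree)
  have hmax : ∀ u : W, (D.h x y u).degree ≤ (D.h x y w₀).degree := by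
    intro u
    by_cases hu : D.h x y u = 0
    · simp [hu]
    · rw [← hsup]; exact Finset.le_sup (f := fun u => (D.h x y u).degree) ((Set.Finite.mem_toFinset _).mpr hu)
  have hNd : (N : WithBot ℤ) < (D.h x y w₀).degree := lt_of_not_ge fun hle =>
    hcon ((hmax w).trans hle)
  obtain ⟨m, hm⟩ : ∃ m : ℤ, (D.h x y w₀).degree = (m : WithBot ℤ) := by
    cases hd : (D.h x y w₀).degree with
    | bot => rw [hd] at hNd; exact absurd hNd not_lt_bot
    | coe m => exact ⟨m, rfl⟩
  have hNm : (N : WithBot ℤ) < (m : WithBot ℤ) := hm ▸ hNd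
  have h1 : (∑ᶠ a : W, ∑ᶠ b : W, D.p a x * D.p b y * D.f a b w₀).coeff m = (D.f x y w₀).coeff m :=
    lhs_coeff D N hbound x y w₀ m hNm.le
  have h2 : (∑ᶠ u : W, D.h x y u * D.p w₀ u).coeff m = (D.h x y w₀).coeff m :=
    rhs_coeff D N x y w₀ m (fun u => (hmax u).trans_eq hm)
  have h3 : (D.f x y w₀).coeff m = 0 := lp_coeff_eq_zero_of_lt ((hbound x y w₀).trans_lt hNm)
  have h4 : (D.h x y w₀).coeff m ≠ 0 :=
    Finsupp.mem_support_iff.mp (Finset.mem_of_max hm)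
  rw [D.h_spec x y w₀, h2] at h1
  exact h4 (h1.trans h3)


/-- if `γ_{x,y,z} ≠ 0` and `a z = N`, then `β_{x,y,z} = γ_{x,y,z} ≠ 0`. -/
theorem stmt5 (cs : CoxeterSystem cm W) (L : W → ℤ) (hL : IsWeightFunction cs L)
    (D : KLData cs L) (N : ℤ) (hN : NSpec cs L N)
    (hbound : ∀ x y z : W, (D.f x y z).degree ≤ (N : WithBot ℤ))
    (a : W → ℤ) (ha : ASpec D a) (x y z : W)
    (hg : gam D a x y z ≠ 0) (haz : a z = N) :
    bet D.toHeckeData N x y z = gam D a x y z ∧ bet D.toHeckeData N x y z ≠ 0 := by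
  have h1 : (∑ᶠ a : W, ∑ᶠ b : W, D.p a x * D.p b y * D.f a b z⁻¹).coeff N = (D.f x y z⁻¹).coeff N :=
    lhs_coeff D N hbound x y z⁻¹ N le_rfl
  have h2 : (∑ᶠ u : W, D.h x y u * D.p z⁻¹ u).coeff N = (D.h x y z⁻¹).coeff N :=
    rhs_coeff D N x y z⁻¹ N (fun u => h_deg_le D N hbound x y u)
  rw [D.h_spec x y z⁻¹, h2] at h1
  have hge : gam D a x y z = (D.h x y z⁻¹).coeff N := by rw [gam, haz]
  constructor
  · rw [bet, hge, h1]
  · rw [bet, ← h1, ← hge]; exact hg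


end Weighted
end
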